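/- Let A be the 9×9 integer matrix with A_{ii}=1 and A_{ij}=1 for i<j exactly when {i,j} is an edge of the tree on {1,...,9} consisting of a path 1–2–3–4–5, a path 6–7–8–9, and the edge {4,6} attached so that vertex 4 has degree 3 (the linking pattern of T̃ with vertices numbered top to bottom), and A_{ij}=0 otherwise. Let B be spanned by v=(-1,2,-3,4,-2,-3,2,-1,1)ᵀ and e₈. Then det(BᵀAB − t·BᵀAᵀB) is a unit in ℤ[t,t⁻¹]. -/
import Mathlib

open Matrix LaurentPolynomial

/-- Seifert-type matrix of the tree on {1,...,9} with edges
{1,2},{2,3},{3,4},{4,5},{4,6},{6,7},{7,8},{8,9}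
(path 1–2–3–4–5, path 6–7–8–9, edge {4,6}; the linking pattern of T̃):
A_{ii} = 1, A_{ij} = 1 for i < j adjacent, 0 otherwise. -/
def stmt1A : Matrix (Fin 9) (Fin 9) ℤ :=
  !![1,1,0,0,0,0,0,0,0;
     0,1,1,0,0,0,0,0,0;
     0,0,1,1,0,0,0,0,0;
     0,0,0,1,1,1,0,0,0;
     0,0,0,0,1,0,0,0,0;
     0,0,0,0,0,1,1,0,0;
     0,0,0,0,0,0,1,1,0;
     0,0,0,0,0,0,0,1,1;
     0,0,0,0,0,0,0,0,1]

/-- The 9×2 matrix with columns v = (-1,2,-3,4,-2,-3,2,-1,1)ᵀ and e₈. -/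
def stmt1B : Matrix (Fin 9) (Fin 2) ℤ :=
  !![-1,0;
      2,0;
     -3,0;
      4,0;
     -2,0;
     -3,0;
      2,0;
     -1,1;
      1,0]

lemma key1 : stmt1Bᵀ * stmt1A * stmt1B = !![0,1;0,1] := by
  decide

lemma key2 : stmt1Bᵀ * stmt1Aᵀ * stmt1B = !![0,0;1,1] := by
  decide

/-- det(BᵀAB − t·BᵀAᵀB) is a unit in ℤ[t,t⁻¹]. -/
theorem stmt1 :
    IsUnit (Matrix.det
      (((stmt1Bᵀ * stmt1A * stmt1B).map (C : ℤ → LaurentPolynomial ℤ)) -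
        (T (R := ℤ) 1) • ((stmt1Bᵀ * stmt1Aᵀ * stmt1B).map (C : ℤ → LaurentPolynomial ℤ)))) := by
  rw [key1, key2]
  have : ((!![0,1;0,1] : Matrix (Fin 2) (Fin 2) ℤ).map (C : ℤ → LaurentPolynomial ℤ) -
      (T (R := ℤ) 1) • ((!![0,0;1,1] : Matrix (Fin 2) (Fin 2) ℤ).map C)).det = T 1 := by
    simp [Matrix.det_fin_two, Matrix.map_apply, Matrix.smul_apply]
  rw [this]
  exact isUnit_T 1
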